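/- Let f = f_d x^d + ⋯ + f_1 x over a field with f_1 ≠ 0 (so f_0 = 0 and f is squarefree at 0). Then for all n ≥ 0 and all k with n - k ≠ 0 in the field, (n - k) f_1 f^n_k = -Σ_{j=1}^{d-1} (n(j+1) - k + j) f_{j+1} f^n_{k-j}, expressing f^n_k as a combination of the d-1 consecutive coefficients to its left. -/

import Mathlib

/-! Differentiating `fⁿ` gives `f · (fⁿ)' = n f' · fⁿ`; multiplying by `X` turns derivatives into
the weights `i ↦ i` on coefficients, so comparing coefficients of `X^(k+1)` yields
`∑ᵢ (k + 1 - (n + 1) i) fᵢ fⁿ_{k+1-i} = 0`. Since `f₀ = 0` the `i = 0` term drops out and the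
`i = 1` term is `(k - n) f₁ fⁿ_k`. -/

open Polynomial Finset

/-- Coefficient of a polynomial at an integer index, zero for negative indices. -/
noncomputable def coeffZ {F : Type*} [Semiring F] (g : Polynomial F) (k : ℤ) : F :=
  if 0 ≤ k then g.coeff k.toNat else 0

namespace Polynomial

section Semiring

variable {R : Type*} [Semiring R]

@[simp]
lemma coeffZ_natCast (p : R[X]) (k : ℕ) : coeffZ p k = p.coeff k := by
  simp [coeffZ]

lemma coeffZ_of_neg (p : R[X]) {k : ℤ} (hk : k < 0) : coeffZ p k = 0 :=
  if_neg hk.not_ge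

lemma coeffZ_natCast_sub (p : R[X]) (m i : ℕ) :
    coeffZ p ((m : ℤ) - i) = if i ≤ m then p.coeff (m - i) else 0 := by
  split_ifs with h
  · rw [← Nat.cast_sub h, coeffZ_natCast]
  · exact coeffZ_of_neg p (by omega)

lemma coeff_mul_eq_sum_range_coeffZ {p : R[X]} {d : ℕ} (hd : p.natDegree ≤ d) (q : R[X])
    (m : ℕ) : (p * q).coeff m = ∑ i ∈ range (d + 1), p.coeff i * coeffZ q ((m : ℤ) - i) := by
  conv_lhs => rw [p.as_sum_range' (d + 1) (Nat.lt_succ_of_le hd)]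
  rw [Finset.sum_mul, finsetSum_coeff]
  refine Finset.sum_congr rfl fun i _ => ?_
  rw [← C_mul_X_pow_eq_monomial, mul_assoc, coeff_C_mul, coeff_X_pow_mul', coeffZ_natCast_sub]

lemma coeff_X_mul_derivative (p : R[X]) (i : ℕ) :
    (X * derivative p).coeff i = i * p.coeff i := by
  cases i with
  | zero => simp
  | succ i => simpa [coeff_derivative] using (Nat.cast_comm (i + 1) (p.coeff (i + 1))).symm

lemma natDegree_X_mul_derivative_le (p : R[X]) :
    (X * derivative p).natDegree ≤ p.natDegree :=
  natDegree_le_iff_coeff_eq_zero.mpr fun i hi => by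
    rw [coeff_X_mul_derivative, coeff_eq_zero_of_natDegree_lt hi, mul_zero]

end Semiring

section CommRing

variable {R : Type*} [CommRing R]

lemma coeffZ_X_mul_derivative (p : R[X]) (t : ℤ) :
    coeffZ (X * derivative p) t = t * coeffZ p t := by
  rcases lt_or_ge t 0 with ht | ht
  · rw [coeffZ_of_neg _ ht, coeffZ_of_neg _ ht, mul_zero]
  · lift t to ℕ using ht
    simp [coeff_X_mul_derivative]

lemma mul_X_mul_derivative_pow (f : R[X]) (n : ℕ) :
    f * (X * derivative (f ^ n)) = (n : R[X]) * ((X * derivative f) * f ^ n) := by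
  rw [derivative_pow, C_eq_natCast]
  cases n with
  | zero => simp
  | succ n => rw [Nat.add_sub_cancel, pow_succ]; ring

theorem sum_range_mul_coeff_mul_coeffZ_pow_eq_zero {f : R[X]} {d : ℕ} (hd : f.natDegree ≤ d)
    (n m : ℕ) :
    ∑ i ∈ range (d + 1), ((m : R) - (n + 1) * i) * f.coeff i * coeffZ (f ^ n) ((m : ℤ) - i)
      = 0 := by
  have h := congrArg (coeff · m) (mul_X_mul_derivative_pow f n)
  simp only [coeff_natCast_mul] at h
  rw [coeff_mul_eq_sum_range_coeffZ hd,
    coeff_mul_eq_sum_range_coeffZ ((natDegree_X_mul_derivative_le f).trans hd), Finset.mul_sum,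
    ← sub_eq_zero, ← Finset.sum_sub_distrib] at h
  rw [← h]
  refine Finset.sum_congr rfl fun i _ => ?_
  rw [coeffZ_X_mul_derivative, coeff_X_mul_derivative]
  push_cast
  ring

end CommRing

end Polynomial

lemma Finset.sum_range_add_two_eq_add_sum_Icc {M : Type*} [AddCommMonoid M] (g : ℕ → M) (e : ℕ) :
    ∑ i ∈ range (e + 2), g i = g 0 + g 1 + ∑ j ∈ Icc 1 e, g (j + 1) := by
  rw [sum_range_succ', range_eq_Ico, sum_eq_sum_Ico_succ_bot (by omega : 0 < e + 1),
    Ico_add_one_right_eq_Icc, zero_add, add_comm _ (g 0), add_assoc]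

theorem coeff_pow_left_recurrence_f0_zero_general {F : Type*} [Field F] (f : Polynomial F)
    (d : ℕ) (hd : f.natDegree ≤ d) (h0 : f.coeff 0 = 0) (h1 : f.coeff 1 ≠ 0)
    (n k : ℕ) :
    ((n : F) - (k : F)) * f.coeff 1 * coeffZ (f ^ n) (k : ℤ) =
      -∑ j ∈ Finset.Icc 1 (d - 1),
        (((n : ℤ) * ((j : ℤ) + 1) - (k : ℤ) + (j : ℤ) : ℤ) : F) * f.coeff (j + 1) *
          coeffZ (f ^ n) ((k : ℤ) - (j : ℤ)) := by
  obtain ⟨e, rfl⟩ : ∃ e, d = e + 1 :=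
    Nat.exists_eq_add_one.mpr ((le_natDegree_of_ne_zero h1).trans hd)
  have h := sum_range_mul_coeff_mul_coeffZ_pow_eq_zero hd n (k + 1)
  rw [Finset.sum_range_add_two_eq_add_sum_Icc, h0, mul_zero, zero_mul, zero_add] at h
  rw [Nat.add_sub_cancel]
  convert neg_eq_of_add_eq_zero_right h using 1
  · simp only [coeffZ_natCast, Nat.cast_add, Nat.cast_one, mul_one, add_sub_add_right_eq_sub,
      add_sub_cancel_right]
    ring
  · rw [← Finset.sum_neg_distrib]
    refine Finset.sum_congr rfl fun j _ => ?_
    rw [show ((k + 1 : ℕ) : ℤ) - ((j + 1 : ℕ) : ℤ) = (k : ℤ) - j by push_cast; ring]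
    push_cast
    ring

/-- Leftward recurrence in the f₀ = 0 case: (n-k) f₁ fⁿ_k =
-Σ_{j=1}^{d-1} (n(j+1) - k + j) f_{j+1} fⁿ_{k-j}, for n - k ≠ 0 in the field. -/
theorem coeff_pow_left_recurrence_f0_zero {F : Type*} [Field F] (f : Polynomial F)
    (d : ℕ) (hd : f.natDegree ≤ d) (h0 : f.coeff 0 = 0) (h1 : f.coeff 1 ≠ 0)
    (n k : ℕ) (hk : (n : F) - (k : F) ≠ 0) :
    ((n : F) - (k : F)) * f.coeff 1 * coeffZ (f ^ n) (k : ℤ) =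
      -∑ j ∈ Finset.Icc 1 (d - 1),
        (((n : ℤ) * ((j : ℤ) + 1) - (k : ℤ) + (j : ℤ) : ℤ) : F) * f.coeff (j + 1) *
          coeffZ (f ^ n) ((k : ℤ) - (j : ℤ)) :=
  coeff_pow_left_recurrence_f0_zero_general f d hd h0 h1 n k
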